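/- Let D ⊂ ℝ^p be open, W: D → ℝ^p continuously differentiable, θ* ∈ D with W(θ*) = 0 and the derivative DW(θ*) invertible. Then for every d > 0 small enough there exist d', d'' > 0 such that: for any continuously differentiable perturbation δ: D → ℝ^p with sup_θ |δ(θ)| < d' and sup_θ ‖Dδ(θ)‖ < d'', the equation W(θ) + δ(θ) = 0 has exactly one solution in the closed ball of radius d around θ*. -/

import Mathlib

/-!
With `B = DW(θ*)⁻¹`, zeros of `F = W + δ` are the fixed points of the simplified Newton map
`θ ↦ θ - B (F θ)`, whose derivative `id - B ∘ DF θ = B ∘ (DW(θ*) - DW θ - Dδ θ)` has norm at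
most `1/2` on a small ball around `θ*` once `‖Dδ‖` is small, by continuity of `DW`. If moreover
`|δ(θ*)| = |F θ*|` is small, the map sends the closed ball of radius `d` into itself, and the
Banach fixed point theorem yields exactly one zero there.
-/

open Metric Set NNReal Function

theorem LipschitzOnWith.existsUnique_isFixedPt {α : Type*} [MetricSpace α] {K : ℝ≥0}
    {f : α → α} {s : Set α} (hsc : IsComplete s) (hne : s.Nonempty) (hsf : MapsTo f s s)
    (hK : K < 1) (hf : LipschitzOnWith K f s) : ∃! x, x ∈ s ∧ IsFixedPt f x := by
  obtain ⟨x₀, hx₀⟩ := hne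
  have hcontr : ContractingWith K (hsf.restrict f s s) :=
    ⟨hK, hsf.lipschitzOnWith_iff_restrict.1 hf⟩
  obtain ⟨x, hxs, hfx, -⟩ := hcontr.exists_fixedPoint' hsc hsf hx₀ (edist_ne_top _ _)
  refine ⟨x, ⟨hxs, hfx⟩, fun y ⟨hys, hfy⟩ => dist_le_zero.1 ?_⟩
  have hle : dist y x ≤ K * dist y x := by
    simpa only [hfy.eq, hfx.eq] using hf.dist_le_mul y hys x hxs
  have hK' : (K : ℝ) < 1 := hK
  nlinarith [dist_nonneg (x := y) (y := x)]

section

variable {E F : Type*} [NormedAddCommGroup E] [NormedSpace ℝ E] [NormedAddCommGroup F]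
  [NormedSpace ℝ F]

def simplifiedNewtonMap (B : F →L[ℝ] E) (f : E → F) (x : E) : E := x - B (f x)

variable {B : F →L[ℝ] E} {f : E → F}

theorem isFixedPt_simplifiedNewtonMap_iff (hB : Injective B) {x : E} :
    IsFixedPt (simplifiedNewtonMap B f) x ↔ f x = 0 := by
  simp [IsFixedPt, simplifiedNewtonMap, map_eq_zero_iff B hB]

theorem hasFDerivAt_simplifiedNewtonMap {x : E} (hf : DifferentiableAt ℝ f x) :
    HasFDerivAt (simplifiedNewtonMap B f) (.id ℝ E - B.comp (fderiv ℝ f x)) x :=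
  (hasFDerivAt_id x).sub (B.hasFDerivAt.comp x hf.hasFDerivAt)

theorem lipschitzOnWith_simplifiedNewtonMap {s : Set E} (hs : Convex ℝ s) {K : ℝ≥0}
    (hf : ∀ x ∈ s, DifferentiableAt ℝ f x)
    (hf' : ∀ x ∈ s, ‖.id ℝ E - B.comp (fderiv ℝ f x)‖ ≤ K) :
    LipschitzOnWith K (simplifiedNewtonMap B f) s :=
  hs.lipschitzOnWith_of_nnnorm_hasFDerivWithin_le
    (fun x hx => (hasFDerivAt_simplifiedNewtonMap (hf x hx)).hasFDerivWithinAt) hf'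

theorem mapsTo_simplifiedNewtonMap_closedBall {x₀ : E} {d : ℝ} {K : ℝ≥0}
    (hN : LipschitzOnWith K (simplifiedNewtonMap B f) (closedBall x₀ d))
    (h₀ : ‖B (f x₀)‖ ≤ (1 - K) * d) :
    MapsTo (simplifiedNewtonMap B f) (closedBall x₀ d) (closedBall x₀ d) := by
  intro x hx
  have hd : 0 ≤ d := nonempty_closedBall.1 ⟨x, hx⟩
  have hmove : dist (simplifiedNewtonMap B f x₀) x₀ = ‖B (f x₀)‖ := by
    simp [simplifiedNewtonMap]
  rw [mem_closedBall] at hx ⊢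
  calc dist (simplifiedNewtonMap B f x) x₀
      ≤ dist (simplifiedNewtonMap B f x) (simplifiedNewtonMap B f x₀)
        + dist (simplifiedNewtonMap B f x₀) x₀ := dist_triangle _ _ _
    _ ≤ K * dist x x₀ + (1 - K) * d :=
        add_le_add (hN.dist_le_mul x hx x₀ (mem_closedBall_self hd)) (hmove ▸ h₀)
    _ ≤ K * d + (1 - K) * d := by gcongr
    _ = d := by ring

theorem existsUnique_zero_mem_closedBall [CompleteSpace E] (hB : Injective B)
    {x₀ : E} {d : ℝ} {K : ℝ≥0} (hK : K < 1)
    (hf : ∀ x ∈ closedBall x₀ d, DifferentiableAt ℝ f x)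
    (hf' : ∀ x ∈ closedBall x₀ d, ‖.id ℝ E - B.comp (fderiv ℝ f x)‖ ≤ K)
    (h₀ : ‖B (f x₀)‖ ≤ (1 - K) * d) :
    ∃! x, x ∈ closedBall x₀ d ∧ f x = 0 := by
  have hd : 0 ≤ d :=
    nonneg_of_mul_nonneg_right ((norm_nonneg _).trans h₀) (sub_pos.2 (NNReal.coe_lt_one.2 hK))
  have hN := lipschitzOnWith_simplifiedNewtonMap (convex_closedBall x₀ d) hf hf'
  simpa only [isFixedPt_simplifiedNewtonMap_iff hB] using
    hN.existsUnique_isFixedPt isClosed_closedBall.isComplete (nonempty_closedBall.2 hd)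
      (mapsTo_simplifiedNewtonMap_closedBall hN h₀) hK

theorem ContinuousLinearEquiv.norm_id_sub_symm_comp_le (A : E ≃L[ℝ] F) (T : E →L[ℝ] F) :
    ‖.id ℝ E - (A.symm : F →L[ℝ] E).comp T‖ ≤ ‖(A.symm : F →L[ℝ] E)‖ * ‖(A : E →L[ℝ] F) - T‖ := by
  rw [← A.coe_symm_comp_coe, ← ContinuousLinearMap.comp_sub]
  exact ContinuousLinearMap.opNorm_comp_le _ _

theorem ContinuousLinearEquiv.existsUnique_zero_mem_closedBall [CompleteSpace E] (A : E ≃L[ℝ] F)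
    {x₀ : E} {d : ℝ} {K : ℝ≥0} (hK : K < 1) (hf : ∀ x ∈ closedBall x₀ d, DifferentiableAt ℝ f x)
    (hf' : ∀ x ∈ closedBall x₀ d, ‖(A.symm : F →L[ℝ] E)‖ * ‖fderiv ℝ f x - A‖ ≤ K)
    (h₀ : ‖(A.symm : F →L[ℝ] E)‖ * ‖f x₀‖ ≤ (1 - K) * d) :
    ∃! x, x ∈ closedBall x₀ d ∧ f x = 0 :=
  _root_.existsUnique_zero_mem_closedBall A.symm.injective hK hf
    (fun x hx => (A.norm_id_sub_symm_comp_le _).trans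
      (norm_sub_rev (E := E →L[ℝ] F) _ _ ▸ hf' x hx))
    ((ContinuousLinearMap.le_opNorm _ _).trans h₀)

theorem ContDiffOn.exists_ball_subset_norm_fderiv_sub_le {s : Set E} (hs : IsOpen s)
    (hf : ContDiffOn ℝ 1 f s) {x₀ : E} (hx₀ : x₀ ∈ s) {ε : ℝ} (hε : 0 < ε) :
    ∃ r > 0, ball x₀ r ⊆ s ∧ ∀ x ∈ ball x₀ r, ‖fderiv ℝ f x - fderiv ℝ f x₀‖ ≤ ε := by
  have hcont : ContinuousAt (fderiv ℝ f) x₀ :=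
    (hf.continuousOn_fderiv_of_isOpen hs le_rfl).continuousAt (hs.mem_nhds hx₀)
  obtain ⟨r, hr, hball⟩ := eventually_nhds_iff_ball.1
    ((hs.eventually_mem hx₀).and (hcont.eventually (closedBall_mem_nhds _ hε)))
  exact ⟨r, hr, fun x hx => (hball x hx).1, fun x hx => by
    simpa only [mem_closedBall, dist_eq_norm] using (hball x hx).2⟩

end

/-- Quantitative implicit function theorem / stability of simple zeros: if `W(θ*) = 0` and
`DW(θ*)` is invertible, then for all sufficiently small `d > 0` there exist `d', d'' > 0`
such that any `C¹` perturbation `δ` with `sup|δ| < d'` and `sup‖Dδ‖ < d''` yields exactly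
one solution of `W(θ) + δ(θ) = 0` in the closed ball of radius `d` around `θ*`. -/
theorem stmt15 {p : ℕ} (D : Set (EuclideanSpace ℝ (Fin p))) (hD : IsOpen D)
    (W : EuclideanSpace ℝ (Fin p) → EuclideanSpace ℝ (Fin p))
    (hW : ContDiffOn ℝ 1 W D)
    (θs : EuclideanSpace ℝ (Fin p)) (hθs : θs ∈ D)
    (hroot : W θs = 0) (hinv : Function.Bijective (fderiv ℝ W θs)) :
    ∃ d₀ > 0, ∀ d : ℝ, 0 < d → d < d₀ →
      ∃ d' > 0, ∃ d'' > 0,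
        ∀ δ : EuclideanSpace ℝ (Fin p) → EuclideanSpace ℝ (Fin p),
          ContDiffOn ℝ 1 δ D →
          (∀ θ ∈ D, ‖δ θ‖ < d') →
          (∀ θ ∈ D, ‖fderivWithin ℝ δ D θ‖ < d'') →
          ∃! θ : EuclideanSpace ℝ (Fin p),
            θ ∈ closedBall θs d ∧ W θ + δ θ = 0 := by
  let A := ContinuousLinearEquiv.ofBijective (fderiv ℝ W θs)
    (LinearMap.ker_eq_bot.2 hinv.1) (LinearMap.range_eq_top.2 hinv.2)
  set c := ‖(A.symm : EuclideanSpace ℝ (Fin p) →L[ℝ] EuclideanSpace ℝ (Fin p))‖ + 1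
  have hc : 0 < c := by positivity
  obtain ⟨r, hr, hrD, hrW⟩ :=
    hW.exists_ball_subset_norm_fderiv_sub_le hD hθs (ε := 1 / (4 * c)) (by positivity)
  refine ⟨r, hr, fun d hd hdr => ⟨d / (2 * c), by positivity, 1 / (4 * c), by positivity,
    fun δ hδ hδ₀ hδ' => ?_⟩⟩
  have hD' {x} (hx : x ∈ closedBall θs d) : x ∈ D := hrD (closedBall_subset_ball hdr hx)
  have hdiff {g : EuclideanSpace ℝ (Fin p) → EuclideanSpace ℝ (Fin p)} (hg : ContDiffOn ℝ 1 g D)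
      x (hx : x ∈ closedBall θs d) : DifferentiableAt ℝ g x :=
    (hg.contDiffAt (hD.mem_nhds (hD' hx))).differentiableAt one_ne_zero
  refine A.existsUnique_zero_mem_closedBall (f := fun θ => W θ + δ θ) (K := 1 / 2)
    (by norm_num) (fun x hx => (hdiff hW x hx).add (hdiff hδ x hx)) (fun x hx => ?_) ?_
  · have hδx : ‖fderiv ℝ δ x‖ ≤ 1 / (4 * c) := by
      simpa only [fderivWithin_of_isOpen hD (hD' hx)] using (hδ' x (hD' hx)).le
    rw [fderiv_fun_add (hdiff hW x hx) (hdiff hδ x hx), ContinuousLinearEquiv.coe_ofBijective,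
      add_sub_right_comm]
    calc _ ≤ c * (1 / (4 * c) + 1 / (4 * c)) := by
          gcongr
          · linarith
          · exact norm_add_le_of_le (hrW x (closedBall_subset_ball hdr hx)) hδx
      _ = 1 / 2 := by field_simp; ring
  · rw [hroot, zero_add]
    calc _ ≤ c * (d / (2 * c)) := by
          gcongr
          · linarith
          · exact (hδ₀ θs hθs).le
      _ = (1 - (1 / 2 : ℝ≥0)) * d := by field_simp; norm_num
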